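/- The third derivative of ξ(t) = (cos²t + 2t·sin t·cos t + t² − π²/4)/cos²t is negative on (−π/2, 0) and positive on (0, π/2), and its limit as t → π/2 from the left is 8π/15. -/

import Mathlib

/-!
Put `u = tan t`. Then `ξ = 1 - π²/4 · (1 + u²) + t · 2u + t² · (1 + u²)`, and functions of the form
`a(tan t) + t b(tan t) + t² c(tan t)` with polynomials `a, b, c` are closed under differentiation,
because `tan' = 1 + tan²`.
Three differentiations give `ξ''' = 8 G(t) / cos⁵ t` with `G = xiNum` odd, so it
remains to show `G > 0` on `(0, π/2)`. On `(0, 4/5]` this follows from Taylor bounds for `sin` and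
`cos` at `0`. Near `π/2`, with `x = π/2 - t`, the same bounds give `G(π/2 - x) = π x⁵/15 + O(x⁶)`;
this proves positivity for `x ≤ 0.78` and, since `cos t = sin x ~ x`, the limit `8π/15`.
-/

open Real Set Filter

noncomputable def xi (t : ℝ) : ℝ :=
  (Real.cos t ^ 2 + 2 * t * Real.sin t * Real.cos t + t ^ 2 - Real.pi ^ 2 / 4) / Real.cos t ^ 2

open Topology

noncomputable def xiNum (t : ℝ) : ℝ :=
  3 * sin t * cos t ^ 2 + 2 * t * cos t * (3 - 2 * cos t ^ 2) +
    (t ^ 2 - π ^ 2 / 4) * sin t * (3 - cos t ^ 2)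

section TanQuad

open Polynomial

noncomputable def tanQuad (p : ℝ[X] × ℝ[X] × ℝ[X]) (t : ℝ) : ℝ :=
  p.1.eval (tan t) + t * p.2.1.eval (tan t) + t ^ 2 * p.2.2.eval (tan t)

noncomputable def tanQuadDeriv (p : ℝ[X] × ℝ[X] × ℝ[X]) : ℝ[X] × ℝ[X] × ℝ[X] :=
  (derivative p.1 * (1 + X ^ 2) + p.2.1, derivative p.2.1 * (1 + X ^ 2) + 2 * p.2.2,
    derivative p.2.2 * (1 + X ^ 2))

theorem hasDerivAt_tanQuad (p : ℝ[X] × ℝ[X] × ℝ[X]) {t : ℝ} (ht : cos t ≠ 0) :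
    HasDerivAt (tanQuad p) (tanQuad (tanQuadDeriv p) t) t := by
  have htan : HasDerivAt tan (1 + tan t ^ 2) t := by
    simpa [one_div, ← inv_one_add_tan_sq ht] using hasDerivAt_tan ht
  have hcomp (q : ℝ[X]) : HasDerivAt (fun y => q.eval (tan y))
      ((derivative q).eval (tan t) * (1 + tan t ^ 2)) t :=
    (q.hasDerivAt (tan t)).comp t htan
  refine (((hcomp p.1).fun_add ((hasDerivAt_id' t).fun_mul (hcomp p.2.1))).fun_add
    ((hasDerivAt_pow 2 t).fun_mul (hcomp p.2.2))).congr_deriv ?_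
  simp only [tanQuad, tanQuadDeriv, eval_add, eval_mul, eval_pow, eval_X, eval_one, eval_ofNat]
  ring

theorem eqOn_deriv_tanQuad {f : ℝ → ℝ} {p : ℝ[X] × ℝ[X] × ℝ[X]}
    (hf : EqOn f (tanQuad p) {t | cos t ≠ 0}) :
    EqOn (deriv f) (tanQuad (tanQuadDeriv p)) {t | cos t ≠ 0} := by
  have hU : IsOpen {t : ℝ | cos t ≠ 0} := isOpen_ne_fun continuous_cos continuous_const
  refine deriv_eqOn hU fun t ht => HasDerivAt.hasDerivWithinAt ?_
  exact (hasDerivAt_tanQuad p ht).congr_of_eventuallyEq (eventually_of_mem (hU.mem_nhds ht) hf)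

theorem xi_eqOn_tanQuad :
    EqOn xi (tanQuad (1 - C (π ^ 2 / 4) * (1 + X ^ 2), 2 * X, 1 + X ^ 2)) {t | cos t ≠ 0} := by
  intro t (ht : cos t ≠ 0)
  simp only [xi, tanQuad, eval_add, eval_sub, eval_mul, eval_pow, eval_X, eval_one, eval_C,
    eval_ofNat, tan_eq_sin_div_cos]
  field_simp
  linear_combination (π ^ 2 - 4 * t ^ 2) * sin_sq_add_cos_sq t

theorem deriv_deriv_deriv_xi {t : ℝ} (ht : cos t ≠ 0) :
    deriv (deriv (deriv xi)) t = 8 * xiNum t / cos t ^ 5 := by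
  rw [eqOn_deriv_tanQuad (eqOn_deriv_tanQuad (eqOn_deriv_tanQuad xi_eqOn_tanQuad)) ht]
  simp only [tanQuad, tan_eq_sin_div_cos, tanQuadDeriv, derivative_sub, derivative_one,
    derivative_mul, derivative_C, zero_mul, derivative_X_pow_succ, Nat.cast_one,
    map_add, map_one, pow_one, zero_add, zero_sub, neg_mul, derivative_ofNat, derivative_X, mul_one,
    derivative_neg, add_zero, neg_add_rev, mul_zero, eval_add, eval_mul, eval_neg, eval_C, eval_one,
    eval_X, eval_pow, eval_ofNat, xiNum]
  field_simp
  linear_combination (64 * t * cos t * (3 + cos t ^ 2 + 3 * sin t ^ 2) +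
    8 * sin t * (4 * t ^ 2 - π ^ 2) * (3 + 3 * sin t ^ 2 + 2 * cos t ^ 2) +
    96 * sin t * cos t ^ 2) * sin_sq_add_cos_sq t

end TanQuad

theorem le_of_hasDerivAt_le {f g f' g' : ℝ → ℝ} (hf : ∀ x, HasDerivAt f (f' x) x)
    (hg : ∀ x, HasDerivAt g (g' x) x) (h₀ : f 0 = g 0) (h' : ∀ x, 0 ≤ x → f' x ≤ g' x)
    {x : ℝ} (hx : 0 ≤ x) : f x ≤ g x := by
  have hmono : MonotoneOn (fun y => g y - f y) (Ici 0) :=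
    monotoneOn_of_hasDerivWithinAt_nonneg (convex_Ici 0)
      (fun y _ => ((hg y).sub (hf y)).continuousAt.continuousWithinAt)
      (fun y _ => ((hg y).sub (hf y)).hasDerivWithinAt)
      (fun y hy => sub_nonneg.2 (h' y (interior_subset hy)))
  have := hmono self_mem_Ici hx hx
  simp only [h₀, sub_self] at this
  linarith

theorem cos_le_taylor_four {x : ℝ} (hx : 0 ≤ x) : cos x ≤ 1 - x ^ 2 / 2 + x ^ 4 / 24 :=
  le_of_hasDerivAt_le (g' := fun y => -y + y ^ 3 / 6) hasDerivAt_cos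
    (fun y => (((hasDerivAt_const y 1).sub ((hasDerivAt_pow 2 y).div_const 2)).add
      ((hasDerivAt_pow 4 y).div_const 24)).congr_deriv (by ring))
    (by norm_num) (fun y hy => by linarith [sin_ge_sub_cube hy]) hx

theorem sin_le_taylor_five {x : ℝ} (hx : 0 ≤ x) : sin x ≤ x - x ^ 3 / 6 + x ^ 5 / 120 :=
  le_of_hasDerivAt_le hasDerivAt_sin
    (fun y => (((hasDerivAt_id y).sub ((hasDerivAt_pow 3 y).div_const 6)).add
      ((hasDerivAt_pow 5 y).div_const 120)).congr_deriv (by simp only [Nat.cast_ofNat, Nat.add_one_sub_one]; ring))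
    (by norm_num) (fun y hy => cos_le_taylor_four hy) hx

theorem taylor_six_le_cos {x : ℝ} (hx : 0 ≤ x) :
    1 - x ^ 2 / 2 + x ^ 4 / 24 - x ^ 6 / 720 ≤ cos x :=
  le_of_hasDerivAt_le (f' := fun y => -y + y ^ 3 / 6 - y ^ 5 / 120)
    (fun y => ((((hasDerivAt_const y 1).sub ((hasDerivAt_pow 2 y).div_const 2)).add
      ((hasDerivAt_pow 4 y).div_const 24)).sub ((hasDerivAt_pow 6 y).div_const 720)).congr_deriv
      (by ring))
    hasDerivAt_cos (by norm_num) (fun y hy => by linarith [sin_le_taylor_five hy]) hx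

theorem taylor_seven_le_sin {x : ℝ} (hx : 0 ≤ x) :
    x - x ^ 3 / 6 + x ^ 5 / 120 - x ^ 7 / 5040 ≤ sin x :=
  le_of_hasDerivAt_le
    (fun y => ((((hasDerivAt_id y).sub ((hasDerivAt_pow 3 y).div_const 6)).add
      ((hasDerivAt_pow 5 y).div_const 120)).sub ((hasDerivAt_pow 7 y).div_const 5040)).congr_deriv
      (by simp only [Nat.cast_ofNat, Nat.add_one_sub_one]; ring))
    hasDerivAt_sin (by norm_num) (fun y hy => taylor_six_le_cos hy) hx

theorem taylor_seven_nonneg {x : ℝ} (hx : 0 ≤ x) (hx1 : x ≤ 1) :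
    0 ≤ x - x ^ 3 / 6 + x ^ 5 / 120 - x ^ 7 / 5040 := by
  nlinarith [pow_le_one₀ hx hx1 (n := 2), pow_le_one₀ hx hx1 (n := 4), pow_nonneg hx 3,
    pow_nonneg hx 5]

/-- The monomials `x ^ k * (b - x)` serve as `linarith` certificates for polynomial inequalities
on `[0, b]`. -/
theorem pow_mul_sub_nonneg {x b : ℝ} (hx : 0 ≤ x) (hb : x ≤ b) (k : ℕ) : 0 ≤ x ^ k * (b - x) :=
  mul_nonneg (pow_nonneg hx k) (sub_nonneg.2 hb)

theorem taylor_bounds_sin_cos {x : ℝ} (hx : 0 ≤ x) (hx1 : x ≤ 1) :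
    0 ≤ x - x ^ 3 / 6 + x ^ 5 / 120 - x ^ 7 / 5040 ∧
    x - x ^ 3 / 6 + x ^ 5 / 120 - x ^ 7 / 5040 ≤ sin x ∧ sin x ≤ x - x ^ 3 / 6 + x ^ 5 / 120 ∧
    0 ≤ cos x ∧
    1 - x ^ 2 / 2 + x ^ 4 / 24 - x ^ 6 / 720 ≤ cos x ∧ cos x ≤ 1 - x ^ 2 / 2 + x ^ 4 / 24 :=
  ⟨taylor_seven_nonneg hx hx1, taylor_seven_le_sin hx, sin_le_taylor_five hx,
    cos_nonneg_of_mem_Icc ⟨by linarith [pi_pos], by linarith [pi_gt_three]⟩,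
    taylor_six_le_cos hx, cos_le_taylor_four hx⟩

theorem xiNum_neg (t : ℝ) : xiNum (-t) = -xiNum t := by
  simp only [xiNum, sin_neg, cos_neg]
  ring

theorem pi_sq_lt : π ^ 2 < 98697 / 10000 := by
  nlinarith [pi_lt_d6, pi_pos]

theorem xiNum_pos_of_le_four_fifths {t : ℝ} (ht : 0 < t) (ht1 : t ≤ 4 / 5) : 0 < xiNum t := by
  have hx : 0 ≤ t := ht.le
  obtain ⟨hS7, hS7le, hS5, hC, hC6le, hC4⟩ := taylor_bounds_sin_cos hx (by linarith)
  have hS := hS7.trans hS7le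
  have hsplit : xiNum t = 3 * sin t - 3 * sin t ^ 3 + 6 * t * cos t - 4 * t * cos t ^ 3 +
      (t ^ 2 - π ^ 2 / 4) * (sin t * (2 + sin t ^ 2)) := by
    unfold xiNum
    linear_combination (3 * sin t - (t ^ 2 - π ^ 2 / 4) * sin t) * sin_sq_add_cos_sq t
  have hsin3 : sin t ^ 3 ≤ (t - t ^ 3 / 6 + t ^ 5 / 120) ^ 3 := by gcongr
  have hcos3 : t * cos t ^ 3 ≤ t * (1 - t ^ 2 / 2 + t ^ 4 / 24) ^ 3 := by gcongr
  have hcos : t * (1 - t ^ 2 / 2 + t ^ 4 / 24 - t ^ 6 / 720) ≤ t * cos t := by gcongr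
  have hS5nn : 0 ≤ t - t ^ 3 / 6 + t ^ 5 / 120 := hS.trans hS5
  have hpoly : 0 ≤ (t - t ^ 3 / 6 + t ^ 5 / 120) * (2 + (t - t ^ 3 / 6 + t ^ 5 / 120) ^ 2) := by
    positivity
  have hlast : (t ^ 2 - 98697 / 40000) *
      ((t - t ^ 3 / 6 + t ^ 5 / 120) * (2 + (t - t ^ 3 / 6 + t ^ 5 / 120) ^ 2)) ≤
      (t ^ 2 - π ^ 2 / 4) * (sin t * (2 + sin t ^ 2)) := calc
    _ ≤ (t ^ 2 - π ^ 2 / 4) *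
        ((t - t ^ 3 / 6 + t ^ 5 / 120) * (2 + (t - t ^ 3 / 6 + t ^ 5 / 120) ^ 2)) :=
      mul_le_mul_of_nonneg_right (by linarith [pi_sq_lt]) hpoly
    _ ≤ _ := mul_le_mul_of_nonpos_left (by gcongr) (by nlinarith [pi_gt_three])
  have h2 : (0 : ℝ) ≤ 16 / 25 - t ^ 2 := by nlinarith
  rw [hsplit]
  linarith [mul_nonneg hx h2, mul_nonneg hx (sq_nonneg (16 / 25 - t ^ 2)),
    mul_nonneg (pow_nonneg hx 5) h2, mul_nonneg (pow_nonneg hx 9) h2,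
    mul_nonneg (pow_nonneg hx 13) h2, mul_nonneg (pow_nonneg hx 17) h2,
    pow_nonneg hx 5, pow_nonneg hx 9, pow_nonneg hx 13, pow_nonneg hx 17]

noncomputable def xiNumA (x : ℝ) : ℝ :=
  sin x * (3 - 2 * sin x ^ 2) - x * cos x * (3 - sin x ^ 2)

noncomputable def xiNumB (x : ℝ) : ℝ :=
  3 * cos x * sin x ^ 2 - 2 * x * sin x * (3 - 2 * sin x ^ 2) + x ^ 2 * cos x * (3 - sin x ^ 2)

theorem xiNum_pi_div_two_sub (x : ℝ) : xiNum (π / 2 - x) = π * xiNumA x + xiNumB x := by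
  simp only [xiNum, xiNumA, xiNumB, sin_pi_div_two_sub, cos_pi_div_two_sub]
  ring

section TaylorEstimates

variable {x : ℝ} (hx : 0 ≤ x)
include hx

theorem le_xiNumA (hx1 : x ≤ 39 / 50) : x ^ 5 / 15 + x ^ 7 / 30 - x ^ 8 / 100 ≤ xiNumA x := by
  obtain ⟨hS7, hS7le, hS5le, hC, hC6le, hC4le⟩ := taylor_bounds_sin_cos hx (by linarith)
  have hS := hS7.trans hS7le
  have hsin3 : sin x ^ 3 ≤ (x - x ^ 3 / 6 + x ^ 5 / 120) ^ 3 := by gcongr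
  have hcos : x * cos x ≤ x * (1 - x ^ 2 / 2 + x ^ 4 / 24) := by gcongr
  have hcs : x * ((1 - x ^ 2 / 2 + x ^ 4 / 24 - x ^ 6 / 720) *
      (x - x ^ 3 / 6 + x ^ 5 / 120 - x ^ 7 / 5040) ^ 2) ≤ x * (cos x * sin x ^ 2) := by gcongr
  unfold xiNumA
  linarith [pow_mul_sub_nonneg hx hx1 7, pow_mul_sub_nonneg hx hx1 8,
    pow_mul_sub_nonneg hx hx1 11, pow_mul_sub_nonneg hx hx1 12, pow_mul_sub_nonneg hx hx1 15,
    pow_mul_sub_nonneg hx hx1 16, pow_mul_sub_nonneg hx hx1 19, pow_mul_sub_nonneg hx hx1 20,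
    pow_nonneg hx 7, pow_nonneg hx 11, pow_nonneg hx 15, pow_nonneg hx 19]

theorem le_xiNumB (hx1 : x ≤ 39 / 50) : -x ^ 6 / 3 + x ^ 8 / 20 ≤ xiNumB x := by
  obtain ⟨hS7, hS7le, hS5le, hC, hC6le, hC4le⟩ := taylor_bounds_sin_cos hx (by linarith)
  have hS := hS7.trans hS7le
  have hC4 : 0 ≤ 1 - x ^ 2 / 2 + x ^ 4 / 24 := hC.trans hC4le
  have hcs : (1 - x ^ 2 / 2 + x ^ 4 / 24 - x ^ 6 / 720) *
      (x - x ^ 3 / 6 + x ^ 5 / 120 - x ^ 7 / 5040) ^ 2 ≤ cos x * sin x ^ 2 := by gcongr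
  have hsin : x * sin x ≤ x * (x - x ^ 3 / 6 + x ^ 5 / 120) := by gcongr
  have hsin3 : x * (x - x ^ 3 / 6 + x ^ 5 / 120 - x ^ 7 / 5040) ^ 3 ≤ x * sin x ^ 3 := by gcongr
  have hcos : x ^ 2 * (1 - x ^ 2 / 2 + x ^ 4 / 24 - x ^ 6 / 720) ≤ x ^ 2 * cos x := by gcongr
  have hcs' : x ^ 2 * (cos x * sin x ^ 2) ≤
      x ^ 2 * ((1 - x ^ 2 / 2 + x ^ 4 / 24) * (x - x ^ 3 / 6 + x ^ 5 / 120) ^ 2) := by gcongr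
  unfold xiNumB
  linarith [pow_mul_sub_nonneg hx hx1 8, pow_mul_sub_nonneg hx hx1 9,
    pow_mul_sub_nonneg hx hx1 12, pow_mul_sub_nonneg hx hx1 13, pow_mul_sub_nonneg hx hx1 16,
    pow_mul_sub_nonneg hx hx1 17, pow_mul_sub_nonneg hx hx1 20, pow_mul_sub_nonneg hx hx1 21,
    pow_nonneg hx 8, pow_nonneg hx 12, pow_nonneg hx 16, pow_nonneg hx 20]

theorem xiNumA_le (hx1 : x ≤ 1 / 10) : xiNumA x ≤ x ^ 5 / 15 + x ^ 7 / 10 := by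
  obtain ⟨hS7, hS7le, hS5le, hC, hC6le, hC4le⟩ := taylor_bounds_sin_cos hx (by linarith)
  have hS := hS7.trans hS7le
  have hC4 : 0 ≤ 1 - x ^ 2 / 2 + x ^ 4 / 24 := hC.trans hC4le
  have hsin3 : (x - x ^ 3 / 6 + x ^ 5 / 120 - x ^ 7 / 5040) ^ 3 ≤ sin x ^ 3 := by gcongr
  have hcos : x * (1 - x ^ 2 / 2 + x ^ 4 / 24 - x ^ 6 / 720) ≤ x * cos x := by gcongr
  have hcs : x * (cos x * sin x ^ 2) ≤
      x * ((1 - x ^ 2 / 2 + x ^ 4 / 24) * (x - x ^ 3 / 6 + x ^ 5 / 120) ^ 2) := by gcongr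
  unfold xiNumA
  linarith [pow_mul_sub_nonneg hx hx1 7, pow_mul_sub_nonneg hx hx1 8, pow_mul_sub_nonneg hx hx1 9,
    pow_mul_sub_nonneg hx hx1 10, pow_mul_sub_nonneg hx hx1 11, pow_mul_sub_nonneg hx hx1 12,
    pow_mul_sub_nonneg hx hx1 13, pow_mul_sub_nonneg hx hx1 14, pow_mul_sub_nonneg hx hx1 15,
    pow_mul_sub_nonneg hx hx1 16, pow_mul_sub_nonneg hx hx1 17, pow_mul_sub_nonneg hx hx1 18,
    pow_mul_sub_nonneg hx hx1 19, pow_mul_sub_nonneg hx hx1 20, pow_nonneg hx 7, pow_nonneg hx 9,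
    pow_nonneg hx 11, pow_nonneg hx 13, pow_nonneg hx 15, pow_nonneg hx 17, pow_nonneg hx 19]

theorem xiNumB_le (hx1 : x ≤ 1 / 10) : xiNumB x ≤ -x ^ 6 / 3 + x ^ 8 := by
  obtain ⟨hS7, hS7le, hS5le, hC, hC6le, hC4le⟩ := taylor_bounds_sin_cos hx (by linarith)
  have hS := hS7.trans hS7le
  have hC4 : 0 ≤ 1 - x ^ 2 / 2 + x ^ 4 / 24 := hC.trans hC4le
  have hcs : cos x * sin x ^ 2 ≤
      (1 - x ^ 2 / 2 + x ^ 4 / 24) * (x - x ^ 3 / 6 + x ^ 5 / 120) ^ 2 := by gcongr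
  have hsin : x * (x - x ^ 3 / 6 + x ^ 5 / 120 - x ^ 7 / 5040) ≤ x * sin x := by gcongr
  have hsin3 : x * sin x ^ 3 ≤ x * (x - x ^ 3 / 6 + x ^ 5 / 120) ^ 3 := by gcongr
  have hcos : x ^ 2 * cos x ≤ x ^ 2 * (1 - x ^ 2 / 2 + x ^ 4 / 24) := by gcongr
  have hcs' : x ^ 2 * ((1 - x ^ 2 / 2 + x ^ 4 / 24 - x ^ 6 / 720) *
      (x - x ^ 3 / 6 + x ^ 5 / 120 - x ^ 7 / 5040) ^ 2) ≤ x ^ 2 * (cos x * sin x ^ 2) := by gcongr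
  unfold xiNumB
  linarith [pow_mul_sub_nonneg hx hx1 8, pow_mul_sub_nonneg hx hx1 9,
    pow_mul_sub_nonneg hx hx1 10, pow_mul_sub_nonneg hx hx1 11, pow_mul_sub_nonneg hx hx1 12,
    pow_mul_sub_nonneg hx hx1 13, pow_mul_sub_nonneg hx hx1 14, pow_mul_sub_nonneg hx hx1 15,
    pow_mul_sub_nonneg hx hx1 16, pow_mul_sub_nonneg hx hx1 17, pow_mul_sub_nonneg hx hx1 18,
    pow_mul_sub_nonneg hx hx1 19, pow_mul_sub_nonneg hx hx1 20, pow_mul_sub_nonneg hx hx1 21,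
    pow_nonneg hx 8, pow_nonneg hx 10, pow_nonneg hx 12, pow_nonneg hx 14, pow_nonneg hx 16,
    pow_nonneg hx 18, pow_nonneg hx 20]

end TaylorEstimates

theorem xiNum_pi_div_two_sub_pos {x : ℝ} (hx : 0 < x) (hx1 : x ≤ 39 / 50) :
    0 < xiNum (π / 2 - x) := by
  have hA := le_xiNumA hx.le hx1
  have hB := le_xiNumB hx.le hx1
  have hq : 0 ≤ x ^ 5 / 15 + x ^ 7 / 30 - x ^ 8 / 100 := by
    nlinarith [pow_mul_sub_nonneg hx.le hx1 7, pow_nonneg hx.le 5, pow_nonneg hx.le 7]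
  have hπA : 3.1415 * (x ^ 5 / 15 + x ^ 7 / 30 - x ^ 8 / 100) ≤ π * xiNumA x := calc
    _ ≤ π * (x ^ 5 / 15 + x ^ 7 / 30 - x ^ 8 / 100) := by gcongr; linarith [pi_gt_d4]
    _ ≤ π * xiNumA x := by gcongr
  rw [xiNum_pi_div_two_sub]
  have h := sub_nonneg.2 hx1
  nlinarith [pow_mul_sub_nonneg hx.le hx1 5, mul_nonneg (pow_nonneg hx.le 5) (mul_nonneg h h),
    mul_nonneg (pow_nonneg hx.le 6) (mul_nonneg h h), pow_mul_sub_nonneg hx.le hx1 6,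
    pow_mul_sub_nonneg hx.le hx1 7, pow_pos hx 5]

theorem xiNum_pos {t : ℝ} (ht : 0 < t) (ht1 : t < π / 2) : 0 < xiNum t := by
  rcases le_or_gt t (4 / 5) with h | h
  · exact xiNum_pos_of_le_four_fifths ht h
  · simpa using xiNum_pi_div_two_sub_pos (x := π / 2 - t) (by linarith)
      (by linarith [pi_lt_d2])

theorem tendsto_xiNum_pi_div_two_sub_div_pow_five :
    Tendsto (fun x => xiNum (π / 2 - x) / x ^ 5) (𝓝[>] 0) (𝓝 (π / 15)) := by
  have hlo : Tendsto (fun x : ℝ => π * (1 / 15 + x ^ 2 / 30 - x ^ 3 / 100) - x / 3 + x ^ 3 / 20)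
      (𝓝[>] 0) (𝓝 (π / 15)) :=
    ((Continuous.tendsto' (by fun_prop) 0 _ (by ring)).mono_left nhdsWithin_le_nhds)
  have hhi : Tendsto (fun x : ℝ => π * (1 / 15 + x ^ 2 / 10) - x / 3 + x ^ 3)
      (𝓝[>] 0) (𝓝 (π / 15)) :=
    ((Continuous.tendsto' (by fun_prop) 0 _ (by ring)).mono_left nhdsWithin_le_nhds)
  have hnear : Ioc (0 : ℝ) (1 / 10) ∈ 𝓝[>] 0 := Ioc_mem_nhdsGT (by norm_num)
  refine tendsto_of_tendsto_of_tendsto_of_le_of_le' hlo hhi ?_ ?_ <;>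
    filter_upwards [hnear] with x ⟨hx, hx1⟩ <;>
    rw [xiNum_pi_div_two_sub]
  · rw [le_div_iff₀ (by positivity)]
    have := le_xiNumA hx.le (by linarith)
    have := le_xiNumB hx.le (by linarith)
    have : π * (x ^ 5 / 15 + x ^ 7 / 30 - x ^ 8 / 100) ≤ π * xiNumA x := by gcongr
    linarith
  · rw [div_le_iff₀ (by positivity)]
    have := xiNumA_le hx.le hx1
    have := xiNumB_le hx.le hx1
    have : π * xiNumA x ≤ π * (x ^ 5 / 15 + x ^ 7 / 10) := by gcongr
    linarith

theorem tendsto_deriv_deriv_deriv_xi :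
    Tendsto (deriv (deriv (deriv xi))) (𝓝[<] (π / 2)) (𝓝 (8 * π / 15)) := by
  have hsinc : Tendsto (fun x => (sinc x)⁻¹) (𝓝[>] 0) (𝓝 1) := by
    simpa [sinc_zero] using
      ((continuous_sinc.tendsto 0).inv₀ (by simp [sinc_zero])).mono_left nhdsWithin_le_nhds
  have hflip : Tendsto (fun t => π / 2 - t) (𝓝[<] (π / 2)) (𝓝[>] 0) := by
    refine tendsto_nhdsWithin_of_tendsto_nhds_of_eventually_within _
      ((Continuous.tendsto' (by fun_prop) _ _ (by simp)).mono_left nhdsWithin_le_nhds) ?_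
    filter_upwards [self_mem_nhdsWithin] with t (ht : t < π / 2) using sub_pos.2 ht
  have hlim := ((tendsto_xiNum_pi_div_two_sub_div_pow_five.const_mul 8).mul
    (hsinc.pow 5)).comp hflip
  rw [show 8 * (π / 15) * 1 ^ 5 = 8 * π / 15 by ring] at hlim
  refine hlim.congr' ?_
  filter_upwards [Ioo_mem_nhdsLT (by linarith [pi_pos] : 0 < π / 2)] with t ⟨ht, ht1⟩
  have hx : 0 < π / 2 - t := sub_pos.2 ht1
  have hx2 : 0 < π - 2 * t := by linarith
  have hcos : cos t ≠ 0 := (cos_pos_of_mem_Ioo ⟨by linarith, ht1⟩).ne'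
  rw [Function.comp_apply, sinc_of_ne_zero hx.ne', sin_pi_div_two_sub, sub_sub_cancel,
    deriv_deriv_deriv_xi hcos]
  field_simp [hx2.ne']

theorem xi_third_deriv :
    (∀ t ∈ Ioo (-(Real.pi / 2)) (0:ℝ), deriv (deriv (deriv xi)) t < 0) ∧
    (∀ t ∈ Ioo (0:ℝ) (Real.pi / 2), 0 < deriv (deriv (deriv xi)) t) ∧
    Filter.Tendsto (deriv (deriv (deriv xi)))
      (nhdsWithin (Real.pi / 2) (Set.Iio (Real.pi / 2))) (nhds (8 * Real.pi / 15)) := by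
  refine ⟨fun t ⟨ht, ht1⟩ => ?_, fun t ⟨ht, ht1⟩ => ?_, tendsto_deriv_deriv_deriv_xi⟩
  · have hcos : 0 < cos t := cos_pos_of_mem_Ioo ⟨ht, by linarith [pi_pos]⟩
    have hneg : xiNum t < 0 := by
      simpa [xiNum_neg] using xiNum_pos (t := -t) (by linarith) (by linarith)
    rw [deriv_deriv_deriv_xi hcos.ne']
    exact div_neg_of_neg_of_pos (by linarith) (pow_pos hcos 5)
  · have hcos : 0 < cos t := cos_pos_of_mem_Ioo ⟨by linarith [pi_pos], ht1⟩
    rw [deriv_deriv_deriv_xi hcos.ne']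
    exact div_pos (by linarith [xiNum_pos ht ht1]) (pow_pos hcos 5)
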